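/- arXiv:1810.03255 — 4 statements merged into one kernel-verified Lean document; each statement's English description precedes it below -/
import Mathlib

section
/- Let 𝒳, 𝒰, 𝒱 be finite sets with 𝒳 nonempty, let d : 𝒳 × 𝒳 → ℝ, and let p be a joint pmf on 𝒳 × 𝒰 × 𝒱 such that X and V are conditionally independent given U, i.e., p(x,u,v)·p_U(u) = p_{XU}(x,u)·p_{UV}(u,v) for all (x,u,v), where p_U, p_{XU}, p_{UV} denote the corresponding marginals. Then the minimum over all functions π̄ : 𝒰 × 𝒱 → 𝒳 of ∑_{x,u,v} p(x,u,v)·d(π̄(u,v), x) equals the minimum over all functions π : 𝒰 → 𝒳 of ∑_{x,u} p_{XU}(x,u)·d(π(u), x). -/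
open Finset

/-- Lemma 2: under the Markov chain X ↔ U ↔ V, side information V
does not improve the minimal expected distortion of estimating X from U. -/
theorem side_info_does_not_help
    (X U V : Type*) [Fintype X] [Fintype U] [Fintype V]
    [DecidableEq U] [DecidableEq V] [Nonempty X]
    (d : X → X → ℝ)
    (p : X × U × V → ℝ)
    (hp0 : ∀ z, 0 ≤ p z)
    (hp1 : ∑ x : X, ∑ u : U, ∑ v : V, p (x, u, v) = 1)
    (hMarkov : ∀ (x : X) (u : U) (v : V),
      p (x, u, v) * (∑ x' : X, ∑ v' : V, p (x', u, v'))
        = (∑ v' : V, p (x, u, v')) * (∑ x' : X, p (x', u, v))) :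
    (Finset.univ.inf' Finset.univ_nonempty
        (fun pibar : U × V → X =>
          ∑ x : X, ∑ u : U, ∑ v : V, p (x, u, v) * d (pibar (u, v)) x))
      = (Finset.univ.inf' Finset.univ_nonempty
          (fun π : U → X =>
            ∑ x : X, ∑ u : U, (∑ v : V, p (x, u, v)) * d (π u) x)) := by
  classical
  -- notation
  set q : X → U → ℝ := fun x u => ∑ v : V, p (x, u, v) with hq
  -- optimal estimator from U alone
  have hopt : ∀ u : U, ∃ b : X, ∀ a : X,
      (∑ x : X, q x u * d b x) ≤ ∑ x : X, q x u * d a x := by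
    intro u
    obtain ⟨b, -, hb⟩ := Finset.exists_min_image (Finset.univ : Finset X)
      (fun a => ∑ x : X, q x u * d a x) Finset.univ_nonempty
    exact ⟨b, fun a => hb a (mem_univ a)⟩
  choose πopt hπopt using hopt
  -- pointwise key inequality
  have key : ∀ (u : U) (v : V) (a : X),
      (∑ x : X, p (x, u, v) * d (πopt u) x) ≤ ∑ x : X, p (x, u, v) * d a x := by
    intro u v a
    by_cases hU : (∑ x : X, q x u) = 0
    · have hz : ∀ x : X, p (x, u, v) = 0 := by
        intro x
        have hqz : ∀ x ∈ (Finset.univ : Finset X), q x u = 0 := by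
          have := (Finset.sum_eq_zero_iff_of_nonneg (fun x _ =>
            Finset.sum_nonneg (fun v _ => hp0 (x, u, v)))).mp hU
          exact this
        have hx : q x u = 0 := hqz x (mem_univ x)
        have := (Finset.sum_eq_zero_iff_of_nonneg (fun v _ => hp0 (x, u, v))).mp hx
        exact this v (mem_univ v)
      simp [hz]
    · have hUpos : 0 < ∑ x : X, q x u :=
        lt_of_le_of_ne (Finset.sum_nonneg (fun x _ =>
          Finset.sum_nonneg (fun v _ => hp0 (x, u, v)))) (Ne.symm hU)
      have hmul : ∀ c : X,
          (∑ x : X, p (x, u, v) * d c x) * (∑ x : X, q x u)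
            = (∑ x' : X, p (x', u, v)) * (∑ x : X, q x u * d c x) := by
        intro c
        rw [Finset.sum_mul, Finset.mul_sum]
        refine Finset.sum_congr rfl (fun x _ => ?_)
        have h := hMarkov x u v
        calc p (x, u, v) * d c x * (∑ x : X, q x u)
            = p (x, u, v) * (∑ x' : X, ∑ v' : V, p (x', u, v')) * d c x := by ring
          _ = (∑ v' : V, p (x, u, v')) * (∑ x' : X, p (x', u, v)) * d c x := by rw [h]
          _ = (∑ x' : X, p (x', u, v)) * (q x u * d c x) := by ring
      have hr : 0 ≤ ∑ x' : X, p (x', u, v) :=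
        Finset.sum_nonneg (fun x _ => hp0 (x, u, v))
      have := mul_le_mul_of_nonneg_left (hπopt u a) hr
      rw [← hmul (πopt u), ← hmul a] at this
      exact le_of_mul_le_mul_right this hUpos
  refine le_antisymm ?_ ?_
  · apply Finset.le_inf'
    intro π _
    have : (Finset.univ.inf' Finset.univ_nonempty
        (fun pibar : U × V → X =>
          ∑ x : X, ∑ u : U, ∑ v : V, p (x, u, v) * d (pibar (u, v)) x))
        ≤ ∑ x : X, ∑ u : U, ∑ v : V, p (x, u, v) * d (π u) x :=
      Finset.inf'_le _ (mem_univ (fun uv : U × V => π uv.1))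
    calc _ ≤ ∑ x : X, ∑ u : U, ∑ v : V, p (x, u, v) * d (π u) x := this
      _ = ∑ x : X, ∑ u : U, (∑ v : V, p (x, u, v)) * d (π u) x := by
          refine Finset.sum_congr rfl (fun x _ => Finset.sum_congr rfl (fun u _ => ?_))
          rw [Finset.sum_mul]
  · apply Finset.le_inf'
    intro pibar _
    have h1 : (Finset.univ.inf' Finset.univ_nonempty
        (fun π : U → X =>
          ∑ x : X, ∑ u : U, (∑ v : V, p (x, u, v)) * d (π u) x))
        ≤ ∑ x : X, ∑ u : U, (∑ v : V, p (x, u, v)) * d (πopt u) x :=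
      Finset.inf'_le _ (mem_univ πopt)
    refine h1.trans ?_
    calc ∑ x : X, ∑ u : U, (∑ v : V, p (x, u, v)) * d (πopt u) x
        = ∑ u : U, ∑ v : V, ∑ x : X, p (x, u, v) * d (πopt u) x := by
          rw [Finset.sum_comm]
          refine Finset.sum_congr rfl (fun u _ => ?_)
          rw [Finset.sum_comm]
          refine Finset.sum_congr rfl (fun v _ => ?_)
          rw [Finset.sum_mul]
      _ ≤ ∑ u : U, ∑ v : V, ∑ x : X, p (x, u, v) * d (pibar (u, v)) x := by
          refine Finset.sum_le_sum (fun u _ => Finset.sum_le_sum (fun v _ => ?_))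
          exact key u v (pibar (u, v))
      _ = ∑ x : X, ∑ u : U, ∑ v : V, p (x, u, v) * d (pibar (u, v)) x := by
          have reorder : ∀ f : U → V → X → ℝ,
              (∑ x : X, ∑ u : U, ∑ v : V, f u v x)
                = ∑ u : U, ∑ v : V, ∑ x : X, f u v x := by
            intro f
            rw [Finset.sum_comm]
            exact Finset.sum_congr rfl fun u _ => Finset.sum_comm
          exact (reorder (fun u v x => p (x, u, v) * d (pibar (u, v)) x)).symm
end

section
/- Let 𝒰, 𝒳 be nonempty finite sets, d : 𝒳 × 𝒳 → ℝ a distortion function, p a joint pmf on 𝒰 × 𝒳, and n ≥ 1. Define the product pmf on 𝒰ⁿ × 𝒳ⁿ by P(uⁿ, xⁿ) = ∏_{i=1}^n p(u_i, x_i), and for π : 𝒰ⁿ → 𝒳ⁿ the n-fold distortion d_n(π(uⁿ), xⁿ) = (1/n) ∑_{i=1}^n d(π(uⁿ)_i, x_i). Then min over all functions πⁿ : 𝒰ⁿ → 𝒳ⁿ of ∑_{uⁿ,xⁿ} P(uⁿ,xⁿ)·d_n(πⁿ(uⁿ), xⁿ) equals (1/n) ∑_{i=1}^n [min over π : 𝒰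 → 𝒳 of ∑_{u,x} p(u,x)·d(π(u), x)], which in turn equals min over π : 𝒰 → 𝒳 of ∑_{u,x} p(u,x)·d(π(u), x). -/
open Finset

lemma prod_ite_split {ι M : Type*} [Fintype ι] [DecidableEq ι] [CommMonoid M]
    (i : ι) (a b : ι → M) :
    ∏ j, (if j = i then a j else b j) = a i * ∏ j ∈ univ.erase i, b j := by
  rw [← Finset.mul_prod_erase univ _ (Finset.mem_univ i)]
  simp only [if_pos rfl]
  congr 1
  exact Finset.prod_congr rfl fun j hj => if_neg (Finset.mem_erase.1 hj).1

lemma pi_sum_factor {ι A : Type*} [Fintype ι] [DecidableEq ι] [Fintype A]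
    (g : ι → A → ℝ) : ∑ x : ι → A, ∏ j, g j (x j) = ∏ j, ∑ t, g j t := by
  rw [Finset.prod_univ_sum]
  simp [Fintype.piFinset_univ]

lemma single_coord {ι A : Type*} [Fintype ι] [DecidableEq ι] [Fintype A]
    (i : ι) (f : ι → A → ℝ) (c : A → ℝ) :
    ∑ x : ι → A, (∏ j, f j (x j)) * c (x i)
      = (∑ t, f i t * c t) * ∏ j ∈ univ.erase i, ∑ t, f j t := by
  have h1 : ∀ x : ι → A, (∏ j, f j (x j)) * c (x i)
      = ∏ j, (if j = i then f j (x j) * c (x j) else f j (x j)) := by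
    intro x
    rw [prod_ite_split i (fun j => f j (x j) * c (x j)) (fun j => f j (x j)),
      ← Finset.mul_prod_erase univ (fun j => f j (x j)) (Finset.mem_univ i)]
    ring
  calc ∑ x : ι → A, (∏ j, f j (x j)) * c (x i)
      = ∑ x : ι → A, ∏ j, (if j = i then f j (x j) * c (x j) else f j (x j)) :=
        Finset.sum_congr rfl fun x _ => h1 x
    _ = ∏ j, ∑ t, (if j = i then f j t * c t else f j t) :=
        pi_sum_factor (fun j t => if j = i then f j t * c t else f j t)
    _ = ∏ j, (if j = i then ∑ t, f j t * c t else ∑ t, f j t) := by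
        refine Finset.prod_congr rfl fun j _ => ?_
        split_ifs <;> rfl
    _ = (∑ t, f i t * c t) * ∏ j ∈ univ.erase i, ∑ t, f j t :=
        prod_ite_split i _ _

lemma single_coord' {ι A : Type*} [Fintype ι] [DecidableEq ι] [Fintype A]
    (i : ι) (q h : A → ℝ) :
    ∑ u : ι → A, h (u i) * ∏ j ∈ univ.erase i, q (u j)
      = (∑ v, h v) * ∏ j ∈ univ.erase i, (∑ v, q v) := by
  calc ∑ u : ι → A, h (u i) * ∏ j ∈ univ.erase i, q (u j)
      = ∑ u : ι → A, ∏ j, (if j = i then h (u j) else q (u j)) := by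
        refine Finset.sum_congr rfl fun u _ => ?_
        rw [prod_ite_split i (fun j => h (u j)) (fun j => q (u j))]
    _ = ∏ j, ∑ v, (if j = i then h v else q v) :=
        pi_sum_factor (fun j v => if j = i then h v else q v)
    _ = ∏ j, (if j = i then ∑ v, h v else ∑ v, q v) := by
        refine Finset.prod_congr rfl fun j _ => ?_
        split_ifs <;> rfl
    _ = (∑ v, h v) * ∏ j ∈ univ.erase i, (∑ v, q v) := prod_ite_split i _ _

/-- Lemma 3: for i.i.d. pairs, the optimal n-fold estimator is
separable: its optimal expected per-letter distortion equals the optimal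
single-letter expected distortion. -/
theorem nfold_estimator_separable
    (U X : Type*) [Fintype U] [Fintype X] [DecidableEq U]
    [Nonempty U] [Nonempty X]
    (d : X → X → ℝ)
    (p : U × X → ℝ)
    (hp0 : ∀ z, 0 ≤ p z)
    (hp1 : ∑ u : U, ∑ x : X, p (u, x) = 1)
    (n : ℕ) (hn : 1 ≤ n) :
    (Finset.univ.inf' Finset.univ_nonempty
        (fun πn : (Fin n → U) → (Fin n → X) =>
          ∑ u : Fin n → U, ∑ x : Fin n → X,
            (∏ i : Fin n, p (u i, x i)) *
              ((1 : ℝ) / n * ∑ i : Fin n, d (πn u i) (x i))))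
      = (1 : ℝ) / n * ∑ _i : Fin n,
          (Finset.univ.inf' Finset.univ_nonempty
            (fun π : U → X => ∑ u : U, ∑ x : X, p (u, x) * d (π u) x))
    ∧
    (Finset.univ.inf' Finset.univ_nonempty
        (fun πn : (Fin n → U) → (Fin n → X) =>
          ∑ u : Fin n → U, ∑ x : Fin n → X,
            (∏ i : Fin n, p (u i, x i)) *
              ((1 : ℝ) / n * ∑ i : Fin n, d (πn u i) (x i))))
      = (Finset.univ.inf' Finset.univ_nonempty
          (fun π : U → X => ∑ u : U, ∑ x : X, p (u, x) * d (π u) x)) := by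
  have hn0 : (n : ℝ) ≠ 0 := Nat.cast_ne_zero.2 (by omega)
  set g : (U → X) → ℝ := fun π => ∑ u : U, ∑ x : X, p (u, x) * d (π u) x with hg
  set F : ((Fin n → U) → (Fin n → X)) → ℝ := fun πn =>
      ∑ u : Fin n → U, ∑ x : Fin n → X,
        (∏ i : Fin n, p (u i, x i)) *
          ((1 : ℝ) / n * ∑ i : Fin n, d (πn u i) (x i)) with hFdef
  set q : U → ℝ := fun v => ∑ x : X, p (v, x) with hq
  set s : U → ℝ := fun v =>
      Finset.univ.inf' Finset.univ_nonempty (fun y : X => ∑ t : X, p (v, t) * d y t) with hs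
  have hq0 : ∀ v, 0 ≤ q v := fun v => Finset.sum_nonneg fun t _ => hp0 _
  have hq1 : ∑ v : U, q v = 1 := hp1
  have hs_le : ∀ v (y : X), s v ≤ ∑ t : X, p (v, t) * d y t := fun v y =>
    Finset.inf'_le _ (Finset.mem_univ y)
  -- optimal single-letter estimator
  have hex : ∀ v : U, ∃ y : X, s v = ∑ t : X, p (v, t) * d y t := by
    intro v
    obtain ⟨y, _, hy⟩ := Finset.exists_mem_eq_inf' (Finset.univ_nonempty)
      (fun y : X => ∑ t : X, p (v, t) * d y t)
    exact ⟨y, hy⟩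
  choose πs hπs using hex
  set S : ℝ := ∑ v : U, s v with hS
  have hgS : ∀ π : U → X, S ≤ g π :=
    fun π => Finset.sum_le_sum fun v _ => hs_le v (π v)
  have hgstar : g πs = S := by
    refine Finset.sum_congr rfl fun v _ => (hπs v).symm
  have hm : Finset.univ.inf' Finset.univ_nonempty g = S := by
    refine le_antisymm ?_ (Finset.le_inf' _ _ fun π _ => hgS π)
    calc Finset.univ.inf' Finset.univ_nonempty g ≤ g πs :=
          Finset.inf'_le _ (Finset.mem_univ πs)
      _ = S := hgstar
  -- prod of marginals over erased set is 1
  have hprod1 : ∀ i : Fin n, (∏ _j ∈ univ.erase i, (∑ v : U, q v)) = 1 := by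
    intro i; rw [hq1]; exact Finset.prod_const_one
  -- rewrite F
  have hF : ∀ πn : (Fin n → U) → (Fin n → X), F πn
      = (1 : ℝ) / n * ∑ i : Fin n, ∑ u : Fin n → U,
          (∑ t : X, p (u i, t) * d (πn u i) t) * ∏ j ∈ univ.erase i, q (u j) := by
    intro πn
    have h1 : F πn = (1 : ℝ) / n * ∑ i : Fin n, ∑ u : Fin n → U, ∑ x : Fin n → X,
        (∏ j : Fin n, p (u j, x j)) * d (πn u i) (x i) := by
      rw [hFdef]
      have step : ∀ (u : Fin n → U) (x : Fin n → X),
          (∏ i : Fin n, p (u i, x i)) * ((1 : ℝ) / n * ∑ i : Fin n, d (πn u i) (x i))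
            = ∑ i : Fin n, (1 : ℝ) / n * ((∏ j : Fin n, p (u j, x j)) * d (πn u i) (x i)) := by
        intro u x
        rw [Finset.mul_sum, Finset.mul_sum]
        exact Finset.sum_congr rfl fun i _ => by ring
      calc ∑ u : Fin n → U, ∑ x : Fin n → X,
            (∏ i : Fin n, p (u i, x i)) * ((1 : ℝ) / n * ∑ i : Fin n, d (πn u i) (x i))
          = ∑ u : Fin n → U, ∑ x : Fin n → X, ∑ i : Fin n,
              (1 : ℝ) / n * ((∏ j : Fin n, p (u j, x j)) * d (πn u i) (x i)) :=
            Finset.sum_congr rfl fun u _ => Finset.sum_congr rfl fun x _ => step u x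
        _ = ∑ u : Fin n → U, ∑ i : Fin n, ∑ x : Fin n → X,
              (1 : ℝ) / n * ((∏ j : Fin n, p (u j, x j)) * d (πn u i) (x i)) :=
            Finset.sum_congr rfl fun u _ => Finset.sum_comm
        _ = ∑ i : Fin n, ∑ u : Fin n → U, ∑ x : Fin n → X,
              (1 : ℝ) / n * ((∏ j : Fin n, p (u j, x j)) * d (πn u i) (x i)) :=
            Finset.sum_comm
        _ = (1 : ℝ) / n * ∑ i : Fin n, ∑ u : Fin n → U, ∑ x : Fin n → X,
              (∏ j : Fin n, p (u j, x j)) * d (πn u i) (x i) := by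
            simp only [← Finset.mul_sum]
    rw [h1]
    congr 1
    refine Finset.sum_congr rfl fun i _ => Finset.sum_congr rfl fun u _ => ?_
    exact single_coord i (fun j t => p (u j, t)) (fun t => d (πn u i) t)
  -- lower bound
  have hlow : ∀ πn : (Fin n → U) → (Fin n → X), S ≤ F πn := by
    intro πn
    rw [hF πn]
    have key : ∀ i : Fin n, S ≤ ∑ u : Fin n → U,
        (∑ t : X, p (u i, t) * d (πn u i) t) * ∏ j ∈ univ.erase i, q (u j) := by
      intro i
      have h2 : S = ∑ u : Fin n → U, s (u i) * ∏ j ∈ univ.erase i, q (u j) := by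
        rw [single_coord' i q s, hprod1 i, mul_one]
      rw [h2]
      refine Finset.sum_le_sum fun u _ => ?_
      exact mul_le_mul_of_nonneg_right (hs_le (u i) (πn u i))
        (Finset.prod_nonneg fun j _ => hq0 _)
    calc S = (1 : ℝ) / n * ∑ _i : Fin n, S := by
          rw [Finset.sum_const, Finset.card_univ, Fintype.card_fin, nsmul_eq_mul]
          field_simp
      _ ≤ _ := by
          refine mul_le_mul_of_nonneg_left (Finset.sum_le_sum fun i _ => key i) ?_
          positivity
  -- the separable estimator achieves S
  have hsep : F (fun u i => πs (u i)) = S := by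
    rw [hF]
    have : ∀ i : Fin n, (∑ u : Fin n → U,
        (∑ t : X, p (u i, t) * d (πs (u i)) t) * ∏ j ∈ univ.erase i, q (u j)) = S := by
      intro i
      have := single_coord' i q (fun v => ∑ t : X, p (v, t) * d (πs v) t)
      rw [this, hprod1 i, mul_one]
      rw [hS]
      refine Finset.sum_congr rfl fun v _ => (hπs v).symm
    rw [Finset.sum_congr rfl fun i _ => this i]
    rw [Finset.sum_const, Finset.card_univ, Fintype.card_fin, nsmul_eq_mul]
    field_simp
  have hFinf : Finset.univ.inf' Finset.univ_nonempty F = S := by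
    refine le_antisymm ?_ (Finset.le_inf' _ _ fun πn _ => hlow πn)
    calc Finset.univ.inf' Finset.univ_nonempty F ≤ F (fun u i => πs (u i)) :=
          Finset.inf'_le _ (Finset.mem_univ _)
      _ = S := hsep
  constructor
  · rw [hFinf, hm, Finset.sum_const, Finset.card_univ, Fintype.card_fin, nsmul_eq_mul]
    field_simp
  · rw [hFinf, hm]
end

section
/- Let 𝒲 be a finite set with at least two elements, let 𝒲₀ be a finite set containing 𝒲 (the decision set, possibly including a null symbol), let 𝒰' be any set, let h : 𝒲 → 𝒰' be a map, and let K be a stochastic kernel from 𝒰' to 𝒲₀ (for each u', K(u', ·) is a pmf on 𝒲₀). Suppose the decoder's decision law satisfies Pr(Ŵ = ŵ | W = w) = K(h(w), ŵ) for all w ∈ 𝒲, ŵ ∈ 𝒲₀ (i.e., the decision depends on the message only through its decoder codeword h(w)). If h(w₁) = h(w₂) for some w₁ ≠ w₂ in 𝒲, then the maximal error probability satisfies max(λ_{w₁}, λ_{w₂}) ≥ 1/2, where λ_w := 1 − K(h(w), w). In particular, if the maximal error probability over all messages is less than 1/2, then h is injective. -/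
open Finset

/-- Lemma 4: if the decoder's decision law depends on the message
only through its decoder codeword h(w) (Pr(Ŵ = ŵ | W = w) = K(h(w), ŵ)), then
two distinct messages sharing a decoder codeword force maximal error
probability at least 1/2; in particular, maximal error probability below 1/2
forces h to be one-to-one. -/
theorem decoder_codebook_injective
    (W W₀ U' : Type*) [Fintype W] [Fintype W₀]
    (ι : W ↪ W₀) (hcard : 2 ≤ Fintype.card W)
    (h : W → U')
    (K : U' → W₀ → ℝ)
    (hK0 : ∀ u' w₀, 0 ≤ K u' w₀) (hK1 : ∀ u', ∑ w₀ : W₀, K u' w₀ = 1) :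
    (∀ w₁ w₂ : W, w₁ ≠ w₂ → h w₁ = h w₂ →
      (1 : ℝ) / 2 ≤ max (1 - K (h w₁) (ι w₁)) (1 - K (h w₂) (ι w₂))) ∧
    ((∀ w : W, 1 - K (h w) (ι w) < (1 : ℝ) / 2) → Function.Injective h) := by
  classical
  have key : ∀ w₁ w₂ : W, w₁ ≠ w₂ → h w₁ = h w₂ →
      (1 : ℝ) / 2 ≤ max (1 - K (h w₁) (ι w₁)) (1 - K (h w₂) (ι w₂)) := by
    intro w₁ w₂ hne heq
    have hι : ι w₁ ≠ ι w₂ := fun hc => hne (ι.injective hc)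
    have hsum : K (h w₁) (ι w₁) + K (h w₁) (ι w₂) ≤ 1 := by
      have hsub : ∑ x ∈ ({ι w₁, ι w₂} : Finset W₀), K (h w₁) x ≤
          ∑ w₀ : W₀, K (h w₁) w₀ :=
        Finset.sum_le_sum_of_subset_of_nonneg (Finset.subset_univ _)
          (fun i _ _ => hK0 _ i)
      rw [Finset.sum_pair hι] at hsub
      linarith [hK1 (h w₁)]
    rw [heq] at hsum ⊢
    rcases le_total (K (h w₂) (ι w₁)) (K (h w₂) (ι w₂)) with hle | hle
    · exact le_max_of_le_left (by linarith)
    · exact le_max_of_le_right (by linarith)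
  refine ⟨key, fun hlt w₁ w₂ heq => by_contra fun hne => ?_⟩
  have := key w₁ w₂ hne heq
  have h1 := hlt w₁
  have h2 := hlt w₂
  rcases max_cases (1 - K (h w₁) (ι w₁)) (1 - K (h w₂) (ι w₂)) with ⟨he, _⟩ | ⟨he, _⟩ <;>
    rw [he] at this <;> linarith
end

section
/- Fix p₁ ∈ [0, 1/2] and α ∈ [0, 1/2], and let d be the Hamming distortion on {0,1}. Let p* be the joint pmf on {0,1} × {0,1} with p*(0,0) = p*(1,1) = (1−α)/2 and p*(0,1) = p*(1,0) = α/2, and let c be the binary symmetric channel with crossover probability p₁. Then: (i) min over π : {0,1} → {0,1} of ∑_{u,x} p*(u,x)·d(π(u),x) = α, so p* ∈ P_α := { p : min_{π} ∑_{u,x} p(u,x)·d(π(u),x) ≥ α }; and (ii) the mutual information of the induced pmf q(u,y) = ∑_x p*(u,x)·c(y|x) equals 1 − H_b(p₁ + α(1−2p₁)). Consequently sup_{p ∈ P_α} I(p) ≥ 1 − H_b(p₁ + α(1 − 2p₁)). -/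
open Finset

/-- Base-2 Shannon entropy of a pmf on a finite set (with 0·log₂0 = 0,
which holds automatically since `Real.logb 2 0 = 0`). -/
noncomputable def ent {S : Type*} [Fintype S] (q : S → ℝ) : ℝ :=
  -∑ s : S, q s * Real.logb 2 (q s)

/-- Mutual information of a pmf on a product of finite sets. -/
noncomputable def mutInfo {A B : Type*} [Fintype A] [Fintype B]
    (q : A × B → ℝ) : ℝ :=
  ent (fun a : A => ∑ b : B, q (a, b)) + ent (fun b : B => ∑ a : A, q (a, b))
    - ent q

/-- The binary entropy function H_b. -/
noncomputable def binEnt (t : ℝ) : ℝ :=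
  -(t * Real.logb 2 t) - (1 - t) * Real.logb 2 (1 - t)

/-! Proof idea: under the channel, the symmetric pmf with parameter `a` becomes the symmetric pmf
with parameter `p₁ + a(1 - 2p₁)`, since a symmetric perturbation followed by a BSC is a BSC. A
symmetric pmf on `Bool × Bool` has uniform marginals, so its mutual information is `1 - H_b` of its
parameter, and its best Hamming guess is the identity, which errs with probability `a ≤ 1/2`.
The supremum bound only needs the mutual informations in question to be bounded, by
`H(U) + H(Y) ≤ 2`. -/

namespace SecureCapacity

open Real

lemma binEnt_eq_binEntropy_div (t : ℝ) : binEnt t = binEntropy t / log 2 := by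
  simp only [binEnt, binEntropy_eq_negMulLog_add_negMulLog_one_sub, negMulLog, logb]
  ring

lemma binEnt_le_one (t : ℝ) : binEnt t ≤ 1 := by
  rw [binEnt_eq_binEntropy_div, div_le_one (log_pos one_lt_two)]
  exact binEntropy_le_log_two

lemma ent_nonneg {S : Type*} [Fintype S] {q : S → ℝ} (hq₀ : ∀ s, 0 ≤ q s)
    (hq₁ : ∑ s, q s = 1) : 0 ≤ ent q := by
  have hle : ∀ s, q s ≤ 1 := fun s =>
    hq₁ ▸ single_le_sum (fun t _ => hq₀ t) (mem_univ s)
  rw [ent, neg_nonneg]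
  exact sum_nonpos fun s _ =>
    mul_nonpos_of_nonneg_of_nonpos (hq₀ s) (logb_nonpos one_lt_two (hq₀ s) (hle s))

lemma ent_bool_of_add_eq_one {q : Bool → ℝ} (hq : q false + q true = 1) :
    ent q = binEnt (q false) := by
  rw [ent, binEnt, Fintype.sum_bool, show q true = 1 - q false by linarith]
  ring

lemma ent_bool_le_one {q : Bool → ℝ} (hq : q false + q true = 1) : ent q ≤ 1 :=
  ent_bool_of_add_eq_one hq ▸ binEnt_le_one _

lemma mutInfo_bool_le_two {q : Bool × Bool → ℝ} (hq₀ : ∀ z, 0 ≤ q z)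
    (hq₁ : ∑ z, q z = 1) : mutInfo q ≤ 2 := by
  rw [Fintype.sum_prod_type, Fintype.sum_bool, Fintype.sum_bool, Fintype.sum_bool] at hq₁
  have hU : ent (fun u => ∑ y, q (u, y)) ≤ 1 :=
    ent_bool_le_one (by simp only [Fintype.sum_bool]; linarith)
  have hY : ent (fun y => ∑ u, q (u, y)) ≤ 1 :=
    ent_bool_le_one (by simp only [Fintype.sum_bool]; linarith)
  have hUY : 0 ≤ ent q := ent_nonneg hq₀ (by
    simp only [Fintype.sum_prod_type, Fintype.sum_bool]; linarith)
  rw [mutInfo]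
  linarith

noncomputable def channelOutput {A X B : Type*} [Fintype X] (p : A × X → ℝ)
    (c : X → B → ℝ) : A × B → ℝ :=
  fun uy => ∑ x, p (uy.1, x) * c x uy.2

section ChannelOutput

variable {A X B : Type*} [Fintype X] {p : A × X → ℝ} {c : X → B → ℝ}

lemma channelOutput_nonneg (hp : ∀ z, 0 ≤ p z) (hc : ∀ x y, 0 ≤ c x y) (z : A × B) :
    0 ≤ channelOutput p c z :=
  sum_nonneg fun _ _ => mul_nonneg (hp _) (hc _ _)

lemma sum_channelOutput [Fintype A] [Fintype B] (hc : ∀ x, ∑ y, c x y = 1) :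
    ∑ z, channelOutput p c z = ∑ z, p z := by
  simp only [channelOutput, Fintype.sum_prod_type]
  refine sum_congr rfl fun u _ => ?_
  rw [sum_comm]
  simp only [← mul_sum, hc, mul_one]

end ChannelOutput

/-- The uniform binary source `X` observed through a symmetric perturbation `U` that flips it
with probability `a`: the law of `(U, X)`. -/
noncomputable def symmPmf (a : ℝ) : Bool × Bool → ℝ :=
  fun ux => if ux.1 = ux.2 then (1 - a) / 2 else a / 2

noncomputable def bsc (p : ℝ) : Bool → Bool → ℝ :=
  fun x y => if y = x then 1 - p else p

lemma symmPmf_nonneg {a : ℝ} (ha₀ : 0 ≤ a) (ha₁ : a ≤ 1) (z : Bool × Bool) :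
    0 ≤ symmPmf a z := by
  unfold symmPmf
  split_ifs <;> linarith

lemma sum_symmPmf (a : ℝ) : ∑ u, ∑ x, symmPmf a (u, x) = 1 := by
  simp only [symmPmf, Fintype.sum_bool]
  norm_num
  ring

lemma bsc_nonneg {p : ℝ} (hp₀ : 0 ≤ p) (hp₁ : p ≤ 1) (x y : Bool) : 0 ≤ bsc p x y := by
  unfold bsc
  split_ifs <;> linarith

lemma sum_bsc (p : ℝ) (x : Bool) : ∑ y, bsc p x y = 1 := by
  cases x <;> simp [bsc]

lemma channelOutput_symmPmf_bsc (a p : ℝ) :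
    channelOutput (symmPmf a) (bsc p) = symmPmf (p + a * (1 - 2 * p)) := by
  ext ⟨u, y⟩
  cases u <;> cases y <;> simp [channelOutput, symmPmf, bsc] <;> ring

lemma mutInfo_symmPmf (b : ℝ) : mutInfo (symmPmf b) = 1 - binEnt b := by
  have hhalf : logb 2 (1 / 2) = -1 := by
    rw [one_div, logb_inv, logb_self_eq_one one_lt_two]
  have hxlogb : ∀ x : ℝ, x / 2 * logb 2 (x / 2) = (x * logb 2 x - x) / 2 := fun x => by
    rcases eq_or_ne x 0 with rfl | hx
    · simp
    · rw [logb_div hx two_ne_zero, logb_self_eq_one one_lt_two]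
      ring
  simp only [mutInfo, ent, binEnt, symmPmf, Fintype.sum_prod_type, Fintype.sum_bool]
  norm_num
  rw [show (1 - b) / 2 + b / 2 = 1 / 2 by ring, show b / 2 + (1 - b) / 2 = 1 / 2 by ring,
    hhalf, hxlogb, hxlogb]
  ring

noncomputable def minHammingRisk (p : Bool × Bool → ℝ) : ℝ :=
  univ.inf' univ_nonempty fun est : Bool → Bool =>
    ∑ u, ∑ x, p (u, x) * (if est u = x then (0 : ℝ) else 1)

lemma minHammingRisk_symmPmf {a : ℝ} (ha : a ≤ 1 / 2) : minHammingRisk (symmPmf a) = a := by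
  apply le_antisymm
  · refine (inf'_le _ (mem_univ id)).trans_eq ?_
    simp [symmPmf]
  · refine le_inf' _ _ fun est _ => ?_
    cases hf : est false <;> cases ht : est true <;> simp [symmPmf, hf, ht] <;> linarith

end SecureCapacity

open SecureCapacity in
/-- Here `{0,1}` is modelled by `Bool`, with `0 = false` and `1 = true`. -/
theorem binary_secure_capacity_achievability
    (p₁ α : ℝ) (hp₁ : p₁ ∈ Set.Icc (0 : ℝ) (1 / 2))
    (hα : α ∈ Set.Icc (0 : ℝ) (1 / 2))
    (pstar : Bool × Bool → ℝ)
    (hpstar : ∀ u x : Bool,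
      pstar (u, x) = if u = x then (1 - α) / 2 else α / 2)
    (c : Bool → Bool → ℝ)
    (hc : ∀ x y : Bool, c x y = if y = x then 1 - p₁ else p₁)
    (Pα : Set (Bool × Bool → ℝ))
    (hPα : Pα = { p : Bool × Bool → ℝ |
      (∀ z : Bool × Bool, 0 ≤ p z) ∧
      (∑ u : Bool, ∑ x : Bool, p (u, x)) = 1 ∧
      α ≤ Finset.univ.inf' Finset.univ_nonempty
            (fun π : Bool → Bool =>
              ∑ u : Bool, ∑ x : Bool,
                p (u, x) * (if π u = x then (0 : ℝ) else 1)) }) :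
    (Finset.univ.inf' Finset.univ_nonempty
        (fun π : Bool → Bool =>
          ∑ u : Bool, ∑ x : Bool,
            pstar (u, x) * (if π u = x then (0 : ℝ) else 1))) = α ∧
    pstar ∈ Pα ∧
    mutInfo (fun uy : Bool × Bool => ∑ x : Bool, pstar (uy.1, x) * c x uy.2)
      = 1 - binEnt (p₁ + α * (1 - 2 * p₁)) ∧
    1 - binEnt (p₁ + α * (1 - 2 * p₁))
      ≤ sSup ((fun p : Bool × Bool → ℝ =>
          mutInfo (fun uy : Bool × Bool =>
            ∑ x : Bool, p (uy.1, x) * c x uy.2)) '' Pα) := by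
  obtain ⟨hp₁0, hp₁2⟩ := hp₁
  obtain ⟨hα0, hα2⟩ := hα
  obtain rfl : pstar = symmPmf α := funext fun ⟨u, x⟩ => hpstar u x
  obtain rfl : c = bsc p₁ := funext₂ hc
  subst hPα
  have hrisk : minHammingRisk (symmPmf α) = α := minHammingRisk_symmPmf hα2
  have hmem : symmPmf α ∈
      {p | (∀ z, 0 ≤ p z) ∧ ∑ u, ∑ x, p (u, x) = 1 ∧ α ≤ minHammingRisk p} :=
    ⟨symmPmf_nonneg hα0 (by linarith), sum_symmPmf α, hrisk.ge⟩
  have hinfo : mutInfo (channelOutput (symmPmf α) (bsc p₁)) =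
      1 - binEnt (p₁ + α * (1 - 2 * p₁)) := by
    rw [channelOutput_symmPmf_bsc, mutInfo_symmPmf]
  refine ⟨hrisk, hmem, hinfo, le_csSup ⟨2, ?_⟩ ⟨_, hmem, hinfo⟩⟩
  rintro _ ⟨p, ⟨hp₀, hp₁, -⟩, rfl⟩
  refine mutInfo_bool_le_two (channelOutput_nonneg hp₀ (bsc_nonneg hp₁0 (by linarith))) ?_
  exact (sum_channelOutput (sum_bsc p₁)).trans (by rw [Fintype.sum_prod_type, hp₁])
end
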